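/- arXiv:2005.10418 — 3 statements merged into one kernel-verified Lean document; each statement's English description precedes it below -/
import Mathlib

section
/- Let $N \geq 1$, let $f, \hat{f} : \mathbb{R}^N \to \mathbb{R}$ be differentiable, each with $c$-Lipschitz gradient ($c > 0$), let $\epsilon \geq 0$, $r \geq 0$, and let $x_1, x_2 \in \mathbb{R}^N$ with $x_1 \neq x_2$, $|\hat{f}(x_1) - f(x_1)| \leq \epsilon$ and $|\hat{f}(x_2) - f(x_2)| \leq \epsilon$. Set $z = x_2 - x_1$. Then for every $x \in \mathbb{R}^N$ with $\|x - x_1\| \leq r$, one has $(\nabla \hat{f}(x) - \nabla f(x)) \cdot z \leq 2\epsilon + 2c\|z\|^2 + 2cr\|z\|$. -/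
/-!
Put `g = f̂ - f`; its gradient is `2c`-Lipschitz. The mean value inequality applied to `g` minus
its linearisation at `x₁` gives `⟪∇g x₁, z⟫ ≤ g x₂ - g x₁ + 2c‖z‖² ≤ 2ε + 2c‖z‖²`, and moving
from `x₁` to `x` changes `⟪∇g ·, z⟫` by at most `2c‖x - x₁‖‖z‖ ≤ 2cr‖z‖`.
-/

open scoped RealInnerProductSpace

theorem norm_sub_sub_fderiv_le_of_lipschitz_fderiv {E F : Type*} [NormedAddCommGroup E]
    [NormedSpace ℝ E] [NormedAddCommGroup F] [NormedSpace ℝ F] {g : E → F}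
    (hg : Differentiable ℝ g) {L : ℝ} (hL : ∀ a b, ‖fderiv ℝ g a - fderiv ℝ g b‖ ≤ L * ‖a - b‖)
    (x y : E) : ‖g y - g x - fderiv ℝ g x (y - x)‖ ≤ L * ‖y - x‖ ^ 2 := by
  rcases eq_or_ne y x with rfl | hyx
  · simp
  have hL0 : 0 ≤ L :=
    nonneg_of_mul_nonneg_left ((norm_nonneg _).trans (hL y x)) (norm_pos_iff.2 (sub_ne_zero.2 hyx))
  have hbound : ∀ z ∈ segment ℝ x y, ‖fderiv ℝ g z - fderiv ℝ g x‖ ≤ L * ‖y - x‖ := fun z hz =>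
    (hL z x).trans (mul_le_mul_of_nonneg_left (norm_sub_le_of_mem_segment hz) hL0)
  calc ‖g y - g x - fderiv ℝ g x (y - x)‖ ≤ L * ‖y - x‖ * ‖y - x‖ :=
        (convex_segment x y).norm_image_sub_le_of_norm_fderiv_le' (fun z _ => hg z) hbound
          (left_mem_segment ℝ x y) (right_mem_segment ℝ x y)
    _ = L * ‖y - x‖ ^ 2 := by ring

section Gradient

variable {F : Type*} [NormedAddCommGroup F] [InnerProductSpace ℝ F] [CompleteSpace F]

theorem norm_fderiv_sub_fderiv_eq_norm_gradient_sub_gradient (g : F → ℝ) (a b : F) :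
    ‖fderiv ℝ g a - fderiv ℝ g b‖ = ‖gradient g a - gradient g b‖ := by
  rw [← toDual_gradient, ← toDual_gradient, ← map_sub, LinearIsometryEquiv.norm_map]

theorem gradient_fun_sub {f g : F → ℝ} {x : F} (hf : DifferentiableAt ℝ f x)
    (hg : DifferentiableAt ℝ g x) :
    gradient (fun y => f y - g y) x = gradient f x - gradient g x := by
  simp only [gradient, fderiv_fun_sub hf hg, map_sub]

theorem abs_sub_sub_inner_gradient_le_of_lipschitz_gradient {g : F → ℝ}
    (hg : Differentiable ℝ g) {L : ℝ}
    (hL : ∀ a b, ‖gradient g a - gradient g b‖ ≤ L * ‖a - b‖) (x y : F) :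
    |g y - g x - ⟪gradient g x, y - x⟫| ≤ L * ‖y - x‖ ^ 2 := by
  rw [inner_gradient_left, ← Real.norm_eq_abs]
  refine norm_sub_sub_fderiv_le_of_lipschitz_fderiv hg (fun a b => ?_) x y
  rw [norm_fderiv_sub_fderiv_eq_norm_gradient_sub_gradient]
  exact hL a b

end Gradient

theorem stmt_2_general (N : ℕ)
    (f fhat : EuclideanSpace ℝ (Fin N) → ℝ)
    (hf : Differentiable ℝ f) (hfhat : Differentiable ℝ fhat)
    (c : ℝ) (hc : 0 < c)
    (hflip : ∀ a b, ‖gradient f a - gradient f b‖ ≤ c * ‖a - b‖)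
    (hfhatlip : ∀ a b, ‖gradient fhat a - gradient fhat b‖ ≤ c * ‖a - b‖)
    (ε : ℝ) (r : ℝ)
    (x₁ x₂ : EuclideanSpace ℝ (Fin N))
    (h₁ : |fhat x₁ - f x₁| ≤ ε) (h₂ : |fhat x₂ - f x₂| ≤ ε)
    (x : EuclideanSpace ℝ (Fin N)) (hx : ‖x - x₁‖ ≤ r) :
    ⟪gradient fhat x - gradient f x, x₂ - x₁⟫ ≤
      2 * ε + 2 * c * ‖x₂ - x₁‖ ^ 2 + 2 * c * r * ‖x₂ - x₁‖ := by
  set g := fun y => fhat y - f y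
  have hg : Differentiable ℝ g := hfhat.sub hf
  have hgrad : ∀ y, gradient g y = gradient fhat y - gradient f y := fun y =>
    gradient_fun_sub (hfhat y) (hf y)
  have hglip : ∀ a b, ‖gradient g a - gradient g b‖ ≤ 2 * c * ‖a - b‖ := fun a b =>
    calc ‖gradient g a - gradient g b‖
        = ‖(gradient fhat a - gradient fhat b) - (gradient f a - gradient f b)‖ := by
          rw [hgrad, hgrad]; abel_nf
      _ ≤ c * ‖a - b‖ + c * ‖a - b‖ :=
          (norm_sub_le _ _).trans (add_le_add (hfhatlip a b) (hflip a b))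
      _ = 2 * c * ‖a - b‖ := by ring
  have hlin :=
    abs_le.1 (abs_sub_sub_inner_gradient_le_of_lipschitz_gradient hg hglip x₁ x₂)
  have hmove : ‖gradient g x - gradient g x₁‖ * ‖x₂ - x₁‖ ≤ 2 * c * r * ‖x₂ - x₁‖ := by
    gcongr
    exact (hglip x x₁).trans (by gcongr)
  rw [← hgrad]
  calc ⟪gradient g x, x₂ - x₁⟫
      = ⟪gradient g x₁, x₂ - x₁⟫ + ⟪gradient g x - gradient g x₁, x₂ - x₁⟫ := by
        rw [inner_sub_left]; ring
    _ ≤ (g x₂ - g x₁ + 2 * c * ‖x₂ - x₁‖ ^ 2) + ‖gradient g x - gradient g x₁‖ * ‖x₂ - x₁‖ :=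
        add_le_add (by linarith [hlin.1]) (real_inner_le_norm _ _)
    _ ≤ 2 * ε + 2 * c * ‖x₂ - x₁‖ ^ 2 + 2 * c * r * ‖x₂ - x₁‖ := by
        linarith [(abs_le.1 h₁).1, (abs_le.1 h₂).2]

/-- Gradient-difference bound near a data point: if `f, f̂ : ℝ^N → ℝ` are differentiable with
`c`-Lipschitz gradients and agree up to error `ε` at `x₁ ≠ x₂`, then with `z = x₂ - x₁`,
for every `x` with `‖x - x₁‖ ≤ r` one has
`(∇f̂(x) - ∇f(x)) ⬝ z ≤ 2ε + 2c‖z‖² + 2cr‖z‖`. -/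
theorem stmt_2 (N : ℕ) (hN : 1 ≤ N)
    (f fhat : EuclideanSpace ℝ (Fin N) → ℝ)
    (hf : Differentiable ℝ f) (hfhat : Differentiable ℝ fhat)
    (c : ℝ) (hc : 0 < c)
    (hflip : ∀ a b, ‖gradient f a - gradient f b‖ ≤ c * ‖a - b‖)
    (hfhatlip : ∀ a b, ‖gradient fhat a - gradient fhat b‖ ≤ c * ‖a - b‖)
    (ε : ℝ) (hε : 0 ≤ ε) (r : ℝ) (hr : 0 ≤ r)
    (x₁ x₂ : EuclideanSpace ℝ (Fin N)) (hne : x₁ ≠ x₂)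
    (h₁ : |fhat x₁ - f x₁| ≤ ε) (h₂ : |fhat x₂ - f x₂| ≤ ε)
    (x : EuclideanSpace ℝ (Fin N)) (hx : ‖x - x₁‖ ≤ r) :
    ⟪gradient fhat x - gradient f x, x₂ - x₁⟫ ≤
      2 * ε + 2 * c * ‖x₂ - x₁‖ ^ 2 + 2 * c * r * ‖x₂ - x₁‖ :=
  stmt_2_general N f fhat hf hfhat c hc hflip hfhatlip ε r x₁ x₂ h₁ h₂ x hx
end

section
/- Let $N \geq 1$, let $f, \hat{f} : \mathbb{R}^N \to \mathbb{R}$ be differentiable, each with $c$-Lipschitz gradient ($c > 0$), let $\epsilon \geq 0$, $r > 0$, and let $D \subseteq \mathbb{R}^N$ be a set with $|\hat{f}(p) - f(p)| \leq \epsilon$ for all $p \in D$. Set $\Delta x = r + \sqrt{6r^2 + \epsilon/c}$. Let $x \in \mathbb{R}^N$ be such that every point $y$ with $\|y - x\| \leq \Delta x + r$ lies within distance $r$ of some point of $D$. Then $\|\nabla \hat{f}(x) - \nabla f(x)\| \leq 4\sqrt{6r^2c^2 + \epsilon c} + 10rc$. -/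
/-!
Put `g = f̂ - f`: its gradient is `2c`-Lipschitz and `|g| ≤ ε` on `D`. By the descent lemma
`|g b - g a - ⟪∇g a, b - a⟫| ≤ c ‖b - a‖²`, comparing `g` at a data point `p` near `x` and a data
point `q` near `x + Δx • ∇g x / ‖∇g x‖` gives
`Δx ‖∇g x‖ ≤ 2ε + 2r ‖∇g x‖ + c ((Δx + r)² + r²)`.
Since `Δx - 2r = √(6r² + ε/c) - r > 0`, solving for `‖∇g x‖` gives the bound.
-/

open InnerProductSpace
open scoped RealInnerProductSpace

variable {E : Type*} [NormedAddCommGroup E] [InnerProductSpace ℝ E] [CompleteSpace E]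

theorem gradient_sub {f g : E → ℝ} {x : E} (hf : DifferentiableAt ℝ f x)
    (hg : DifferentiableAt ℝ g x) :
    gradient (fun z => f z - g z) x = gradient f x - gradient g x := by
  refine HasGradientAt.gradient ?_
  rw [hasGradientAt_iff_hasFDerivAt, map_sub]
  exact hf.hasGradientAt.hasFDerivAt.sub hg.hasGradientAt.hasFDerivAt

theorem hasDerivAt_comp_add_smul {g : E → ℝ} (hg : Differentiable ℝ g) (a v : E) (s : ℝ) :
    HasDerivAt (fun s : ℝ => g (a + s • v)) ⟪gradient g (a + s • v), v⟫ s := by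
  have hline : HasDerivAt (fun s : ℝ => a + s • v) v s := by
    simpa using ((hasDerivAt_id s).smul_const v).const_add a
  have : HasDerivAt (fun s : ℝ => g (a + s • v)) (toDual ℝ E (gradient g (a + s • v)) v) s :=
    (hg (a + s • v)).hasGradientAt.hasFDerivAt.comp_hasDerivAt s hline
  rwa [toDual_apply_apply] at this

theorem abs_sub_sub_inner_gradient_le {g : E → ℝ} {L : ℝ} (hg : Differentiable ℝ g)
    (hL : ∀ a b, ‖gradient g a - gradient g b‖ ≤ L * ‖a - b‖) (a b : E) :
    |g b - g a - ⟪gradient g a, b - a⟫| ≤ L / 2 * ‖b - a‖ ^ 2 := by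
  set v := b - a
  have hφ (s : ℝ) : HasDerivAt (fun s : ℝ => g (a + s • v) - g a - s * ⟪gradient g a, v⟫)
      ⟪gradient g (a + s • v) - gradient g a, v⟫ s := by
    rw [inner_sub_left]
    exact (((hasDerivAt_comp_add_smul hg a v s).sub_const (g a)).sub
      ((hasDerivAt_id' s).mul_const ⟪gradient g a, v⟫)).congr_deriv (by ring)
  have hB (s : ℝ) : HasDerivAt (fun s : ℝ => L / 2 * ‖v‖ ^ 2 * s ^ 2) (L * ‖v‖ ^ 2 * s) s :=
    ((hasDerivAt_pow 2 s).const_mul (L / 2 * ‖v‖ ^ 2)).congr_deriv (by push_cast; ring)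
  have key := image_norm_le_of_norm_deriv_right_le_deriv_boundary
    (fun s _ => (hφ s).continuousAt.continuousWithinAt) (fun s _ => (hφ s).hasDerivWithinAt)
    (by simp) hB ?_ (Set.right_mem_Icc.2 zero_le_one)
  · simpa [v] using key
  · intro s hs
    calc ‖⟪gradient g (a + s • v) - gradient g a, v⟫‖
        ≤ ‖gradient g (a + s • v) - gradient g a‖ * ‖v‖ := norm_inner_le_norm _ _
      _ ≤ L * ‖s • v‖ * ‖v‖ := by
          gcongr
          simpa using hL (a + s • v) a
      _ = L * ‖v‖ ^ 2 * s := by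
          rw [norm_smul, Real.norm_of_nonneg hs.1]; ring

theorem inner_gradient_le_of_abs_le {g : E → ℝ} {L ε r : ℝ} (hg : Differentiable ℝ g)
    (hL : ∀ a b, ‖gradient g a - gradient g b‖ ≤ L * ‖a - b‖) (hL0 : 0 ≤ L) {x v p q : E}
    (hp : |g p| ≤ ε) (hq : |g q| ≤ ε) (hpx : ‖p - x‖ ≤ r) (hqx : ‖q - (x + v)‖ ≤ r) :
    ⟪gradient g x, v⟫ ≤ 2 * ε + 2 * r * ‖gradient g x‖ + L / 2 * ((‖v‖ + r) ^ 2 + r ^ 2) := by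
  set G := gradient g x
  have hq' : ‖q - x‖ ≤ ‖v‖ + r := by
    calc ‖q - x‖ = ‖v + (q - (x + v))‖ := by congr 1; abel
      _ ≤ ‖v‖ + r := (norm_add_le _ _).trans (by gcongr)
  have hTp := abs_le.1 (abs_sub_sub_inner_gradient_le hg hL x p)
  have hTq := abs_le.1 (abs_sub_sub_inner_gradient_le hg hL x q)
  have hsq_p : L / 2 * ‖p - x‖ ^ 2 ≤ L / 2 * r ^ 2 := by gcongr
  have hsq_q : L / 2 * ‖q - x‖ ^ 2 ≤ L / 2 * (‖v‖ + r) ^ 2 := by gcongr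
  have hshift : ⟪G, v - (q - x) + (p - x)⟫ ≤ ‖G‖ * (2 * r) := by
    calc ⟪G, v - (q - x) + (p - x)⟫ ≤ ‖G‖ * ‖v - (q - x) + (p - x)‖ := real_inner_le_norm _ _
      _ ≤ ‖G‖ * (2 * r) := by
        gcongr
        calc ‖v - (q - x) + (p - x)‖ = ‖(p - x) - (q - (x + v))‖ := by congr 1; abel
          _ ≤ ‖p - x‖ + ‖q - (x + v)‖ := norm_sub_le _ _
          _ ≤ 2 * r := by linarith
  rw [inner_add_right, inner_sub_right] at hshift
  linarith [(abs_le.1 hp).1, (abs_le.1 hq).2]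

theorem le_four_sqrt_add_of_mul_le {c r ε M : ℝ} (hc : 0 < c) (hr : 0 < r) (hε : 0 ≤ ε)
    (h : (r + √(6 * r ^ 2 + ε / c)) * M ≤
      2 * ε + 2 * r * M + c * ((r + √(6 * r ^ 2 + ε / c) + r) ^ 2 + r ^ 2)) :
    M ≤ 4 * √(6 * r ^ 2 * c ^ 2 + ε * c) + 10 * r * c := by
  set t := √(6 * r ^ 2 + ε / c)
  have ht2 : c * t ^ 2 = 6 * c * r ^ 2 + ε := by
    rw [Real.sq_sqrt (by positivity)]; field_simp
  have hrt : r < t := Real.lt_sqrt_of_sq_lt (by nlinarith [div_nonneg hε hc.le])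
  have hsqrt : √(6 * r ^ 2 * c ^ 2 + ε * c) = c * t := by
    rw [show 6 * r ^ 2 * c ^ 2 + ε * c = c ^ 2 * (6 * r ^ 2 + ε / c) by field_simp,
      Real.sqrt_mul (sq_nonneg c), Real.sqrt_sq hc.le]
  rw [hsqrt]
  refine le_of_mul_le_mul_right ?_ (sub_pos.2 hrt)
  nlinarith [mul_pos (mul_pos hc hr) (sub_pos.2 hrt)]

theorem stmt_5_general (N : ℕ)
    (f fhat : EuclideanSpace ℝ (Fin N) → ℝ)
    (hf : Differentiable ℝ f) (hfhat : Differentiable ℝ fhat)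
    (c : ℝ) (hc : 0 < c)
    (hflip : ∀ a b, ‖gradient f a - gradient f b‖ ≤ c * ‖a - b‖)
    (hfhatlip : ∀ a b, ‖gradient fhat a - gradient fhat b‖ ≤ c * ‖a - b‖)
    (ε : ℝ) (hε : 0 ≤ ε) (r : ℝ) (hr : 0 < r)
    (D : Set (EuclideanSpace ℝ (Fin N)))
    (hD : ∀ p ∈ D, |fhat p - f p| ≤ ε)
    (x : EuclideanSpace ℝ (Fin N))
    (hfill : ∀ y : EuclideanSpace ℝ (Fin N),
      ‖y - x‖ ≤ (r + Real.sqrt (6 * r ^ 2 + ε / c)) + r →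
        ∃ p ∈ D, ‖y - p‖ ≤ r) :
    ‖gradient fhat x - gradient f x‖ ≤
      4 * Real.sqrt (6 * r ^ 2 * c ^ 2 + ε * c) + 10 * r * c := by
  set Δ := r + √(6 * r ^ 2 + ε / c)
  have hΔ : 0 ≤ Δ := by positivity
  have hgrad z : gradient (fun z => fhat z - f z) z = gradient fhat z - gradient f z :=
    gradient_sub (hfhat z) (hf z)
  have hlip a b : ‖gradient (fun z => fhat z - f z) a - gradient (fun z => fhat z - f z) b‖
      ≤ 2 * c * ‖a - b‖ := by
    rw [hgrad, hgrad, sub_sub_sub_comm]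
    linarith [norm_sub_le (gradient fhat a - gradient fhat b) (gradient f a - gradient f b),
      hfhatlip a b, hflip a b]
  set G := gradient fhat x - gradient f x
  -- junk division makes `v = 0` when `G = 0`, so `hv` and `hGv` need no case split
  set v := (Δ / ‖G‖) • G
  have hv : ‖v‖ ≤ Δ := by
    rw [norm_smul, Real.norm_of_nonneg (by positivity), div_mul_eq_mul_div]
    exact div_le_of_le_mul₀ (norm_nonneg _) hΔ le_rfl
  have hGv : ⟪G, v⟫ = Δ * ‖G‖ := by
    rw [real_inner_smul_right, real_inner_self_eq_norm_sq, sq, div_mul_eq_mul_div, mul_div_assoc,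
      mul_self_div_self]
  obtain ⟨p, hpD, hpx⟩ := hfill x (by rw [sub_self, norm_zero]; positivity)
  obtain ⟨q, hqD, hqx⟩ := hfill (x + v) (by rw [add_sub_cancel_left]; linarith)
  have key := inner_gradient_le_of_abs_le (g := fun z => fhat z - f z) (hfhat.sub hf) hlip
    (by positivity) (hD p hpD) (hD q hqD) ((norm_sub_rev p x).trans_le hpx)
    ((norm_sub_rev q _).trans_le hqx)
  rw [hgrad, hGv, mul_div_cancel_left₀ c two_ne_zero] at key
  exact le_four_sqrt_add_of_mul_le hc hr hε (key.trans (by gcongr))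

/-- Central gradient-approximation bound: if `f, f̂ : ℝ^N → ℝ` are differentiable with
`c`-Lipschitz gradients, `|f̂ - f| ≤ ε` on a data set `D`, and every point within distance
`Δx + r` of `x` (where `Δx = r + √(6r² + ε/c)`) lies within distance `r` of `D`, then
`‖∇f̂(x) - ∇f(x)‖ ≤ 4√(6r²c² + εc) + 10rc`. -/
theorem stmt_5 (N : ℕ) (hN : 1 ≤ N)
    (f fhat : EuclideanSpace ℝ (Fin N) → ℝ)
    (hf : Differentiable ℝ f) (hfhat : Differentiable ℝ fhat)
    (c : ℝ) (hc : 0 < c)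
    (hflip : ∀ a b, ‖gradient f a - gradient f b‖ ≤ c * ‖a - b‖)
    (hfhatlip : ∀ a b, ‖gradient fhat a - gradient fhat b‖ ≤ c * ‖a - b‖)
    (ε : ℝ) (hε : 0 ≤ ε) (r : ℝ) (hr : 0 < r)
    (D : Set (EuclideanSpace ℝ (Fin N)))
    (hD : ∀ p ∈ D, |fhat p - f p| ≤ ε)
    (x : EuclideanSpace ℝ (Fin N))
    (hfill : ∀ y : EuclideanSpace ℝ (Fin N),
      ‖y - x‖ ≤ (r + Real.sqrt (6 * r ^ 2 + ε / c)) + r →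
        ∃ p ∈ D, ‖y - p‖ ≤ r) :
    ‖gradient fhat x - gradient f x‖ ≤
      4 * Real.sqrt (6 * r ^ 2 * c ^ 2 + ε * c) + 10 * r * c :=
  stmt_5_general N f fhat hf hfhat c hc hflip hfhatlip ε hε r hr D hD x hfill
end

section
/- Let $(a_i)_{i \in \mathbb{N}}$ be a real sequence with $a_i \neq 0$ for all $i$, let $(b_i)_{i \in \mathbb{N}}$ be a bounded real sequence, and let $\gamma > 0$. Let $P_j = \prod_{i=0}^{j-1} a_i$ and suppose the sequence $\left(\frac{1}{n} \log |P_n|\right)_{n \geq 1}$ is bounded with $\limsup_{n \to \infty} \frac{1}{n} \log |P_n| = \lambda \in \mathbb{R}$. Then, with $A_n = \prod_{i=0}^{n-1} \begin{pmatrix} a_i & 0 \\ b_i & \gamma \end{pmatrix}$ (product with index $n-1$ leftmost) and $\|\cdot\|$ the $\ell^2 \to \ell^2$ operator norm, $\limsup_{n \to \infty} \frac{1}{n} \log \|A_n\| = \max(\lambda, \log \gamma)$. -/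
/-!
The product is lower triangular, `Aₙ = !![Pₙ, 0; cₙ, γⁿ]` with `c_{n+1} = bₙ Pₙ + γ cₙ`, so its
diagonal entries give `max |Pₙ| γⁿ ≤ ‖Aₙ‖` and hence the lower bound. Conversely, for every
`M = exp μ` with `μ > max λ (log γ)` we get `|Pₙ| ≤ C Mⁿ` for all `n`, the recursion then gives
`M |cₙ| ≤ n B C Mⁿ`, and bounding `‖Aₙ‖` by the sum of its entries yields `‖Aₙ‖ = O(n Mⁿ)`;
the polynomial factor is invisible at exponential scale.
-/

open scoped Matrix.Norms.L2Operator
open Filter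

namespace Matrix

variable {𝕜 m n : Type*} [RCLike 𝕜] [Fintype m] [Fintype n] [DecidableEq n]

lemma norm_apply_le_l2_opNorm (A : Matrix m n 𝕜) (i : m) (j : n) : ‖A i j‖ ≤ ‖A‖ := by
  classical
  have h := A.l2_opNorm_mulVec (EuclideanSpace.single j 1)
  rw [PiLp.norm_single, norm_one, mul_one] at h
  refine le_trans (le_of_eq ?_) ((PiLp.norm_apply_le _ i).trans h)
  simp

lemma l2_opNorm_single_le [DecidableEq m] (i : m) (j : n) (c : 𝕜) :
    ‖single i j c‖ ≤ ‖c‖ := by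
  rw [l2_opNorm_def]
  refine ContinuousLinearMap.opNorm_le_bound _ (norm_nonneg c) fun x => ?_
  change ‖WithLp.toLp 2 (single i j c *ᵥ x.ofLp)‖ ≤ _
  rw [single_mulVec, ← Pi.single, PiLp.toLp_single, PiLp.norm_single, norm_mul]
  gcongr
  exact PiLp.norm_apply_le x j

lemma l2_opNorm_le_sum_norm_apply (A : Matrix m n 𝕜) : ‖A‖ ≤ ∑ i, ∑ j, ‖A i j‖ := by
  classical
  conv_lhs => rw [matrix_eq_sum_single A]
  exact (norm_sum_le _ _).trans (Finset.sum_le_sum fun i _ =>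
    (norm_sum_le _ _).trans (Finset.sum_le_sum fun j _ => l2_opNorm_single_le i j _))

end Matrix

open Real Finset Topology

lemma exists_le_mul_pow_of_limsup_lt {x : ℕ → ℝ} {M : ℝ} (hx : ∀ n, 0 < x n) (hM : 0 < M)
    (hbdd : IsBoundedUnder (· ≤ ·) atTop fun n : ℕ => 1 / (n : ℝ) * log (x n))
    (hlt : limsup (fun n : ℕ => 1 / (n : ℝ) * log (x n)) atTop < log M) :
    ∃ C, ∀ n, x n ≤ C * M ^ n := by
  have hev : ∀ᶠ n : ℕ in atTop, ‖x n‖ ≤ ‖M ^ n‖ := by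
    filter_upwards [eventually_lt_of_limsup_lt hlt hbdd, eventually_ge_atTop 1] with n hn hn1
    have hn0 : (0 : ℝ) < n := by exact_mod_cast hn1
    rw [one_div, inv_mul_lt_iff₀ hn0, ← log_pow, log_lt_log_iff (hx n) (pow_pos hM n)] at hn
    rw [norm_of_nonneg (hx n).le, norm_of_nonneg (pow_pos hM n).le]
    exact hn.le
  obtain ⟨C, hC⟩ := (Asymptotics.isBigO_nat_atTop_iff fun n h => absurd h (pow_pos hM n).ne').1
    (Asymptotics.IsBigO.of_bound' hev)
  refine ⟨C, fun n => ?_⟩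
  simpa [norm_of_nonneg (hx n).le, norm_of_nonneg (pow_pos hM n).le] using hC n

lemma tendsto_one_div_mul_log_mul_pow {D M : ℝ} (hD : 0 < D) (hM : 0 < M) :
    Tendsto (fun n : ℕ => 1 / (n : ℝ) * log (D * (n + 1) * M ^ n)) atTop (𝓝 (log M)) := by
  have hlog : Tendsto (fun n : ℕ => log ((n : ℝ) + 1) / n) atTop (𝓝 0) := by
    simpa [Function.comp_def] using (tendsto_pow_log_div_mul_add_atTop 1 (-1) 1 one_ne_zero).comp
      (tendsto_atTop_add_const_right _ 1 tendsto_natCast_atTop_atTop)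
  have hsum := ((tendsto_const_div_atTop_nhds_zero_nat (log D)).add hlog).add_const (log M)
  rw [zero_add, zero_add] at hsum
  refine hsum.congr' ((eventually_ne_atTop 0).mono fun n hn => ?_)
  have hn0 : (n : ℝ) ≠ 0 := Nat.cast_ne_zero.2 hn
  dsimp only
  rw [log_mul (by positivity) (by positivity), log_mul (by positivity) (by positivity), log_pow]
  field_simp

lemma eventually_one_div_mul_log_lt_of_le_mul_pow {x : ℕ → ℝ} {D M c : ℝ} (hx : ∀ n, 0 < x n)
    (hM : 0 < M) (hxD : ∀ n, x n ≤ D * (n + 1) * M ^ n) (hc : log M < c) :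
    ∀ᶠ n : ℕ in atTop, 1 / (n : ℝ) * log (x n) < c := by
  have hD : 0 < D := by simpa using (hx 0).trans_le (hxD 0)
  filter_upwards [(tendsto_one_div_mul_log_mul_pow hD hM).eventually (gt_mem_nhds hc)] with n hn
  exact (mul_le_mul_of_nonneg_left (log_le_log (hx n) (hxD n)) (by positivity)).trans_lt hn

section JacobianProduct

variable (a b : ℕ → ℝ) (γ : ℝ)

noncomputable def jacobianProd (n : ℕ) : Matrix (Fin 2) (Fin 2) ℝ :=
  ((List.range n).reverse.map fun i => !![a i, 0; b i, γ]).prod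

lemma jacobianProd_succ (n : ℕ) :
    jacobianProd a b γ (n + 1) = !![a n, 0; b n, γ] * jacobianProd a b γ n := by
  simp [jacobianProd, List.range_succ]

lemma jacobianProd_zero_one (n : ℕ) : jacobianProd a b γ n 0 1 = 0 := by
  induction n with
  | zero => simp [jacobianProd]
  | succ n ih => simp [jacobianProd_succ, Matrix.mul_apply, ih]

lemma jacobianProd_zero_zero (n : ℕ) : jacobianProd a b γ n 0 0 = ∏ i ∈ range n, a i := by
  induction n with
  | zero => simp [jacobianProd]
  | succ n ih => simp [jacobianProd_succ, Matrix.mul_apply, ih, prod_range_succ, mul_comm]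

lemma jacobianProd_one_one (n : ℕ) : jacobianProd a b γ n 1 1 = γ ^ n := by
  induction n with
  | zero => simp [jacobianProd]
  | succ n ih =>
    simp [jacobianProd_succ, Matrix.mul_apply, ih, jacobianProd_zero_one, pow_succ, mul_comm]

lemma jacobianProd_succ_one_zero (n : ℕ) :
    jacobianProd a b γ (n + 1) 1 0 = b n * ∏ i ∈ range n, a i + γ * jacobianProd a b γ n 1 0 := by
  simp [jacobianProd_succ, Matrix.mul_apply, jacobianProd_zero_zero]

lemma abs_prod_le_norm_jacobianProd (n : ℕ) :
    |∏ i ∈ range n, a i| ≤ ‖jacobianProd a b γ n‖ := by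
  have h := (jacobianProd a b γ n).norm_apply_le_l2_opNorm 0 0
  rwa [jacobianProd_zero_zero, Real.norm_eq_abs] at h

variable {γ}

lemma pow_le_norm_jacobianProd (hγ : 0 ≤ γ) (n : ℕ) : γ ^ n ≤ ‖jacobianProd a b γ n‖ := by
  have h := (jacobianProd a b γ n).norm_apply_le_l2_opNorm 1 1
  rwa [jacobianProd_one_one, Real.norm_eq_abs, abs_of_nonneg (pow_nonneg hγ n)] at h

lemma norm_jacobianProd_le (hγ : 0 ≤ γ) (n : ℕ) :
    ‖jacobianProd a b γ n‖ ≤ |∏ i ∈ range n, a i| + |jacobianProd a b γ n 1 0| + γ ^ n := by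
  have h := (jacobianProd a b γ n).l2_opNorm_le_sum_norm_apply
  simp only [Fin.sum_univ_two, Real.norm_eq_abs, jacobianProd_zero_zero, jacobianProd_zero_one,
    jacobianProd_one_one, abs_zero, abs_of_nonneg (pow_nonneg hγ n)] at h
  linarith

lemma mul_abs_jacobianProd_one_zero_le {B C M : ℝ} (hγ : 0 ≤ γ) (hγM : γ ≤ M)
    (hb : ∀ i, |b i| ≤ B) (hP : ∀ n, |∏ i ∈ range n, a i| ≤ C * M ^ n) (n : ℕ) :
    M * |jacobianProd a b γ n 1 0| ≤ n * B * C * M ^ n := by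
  have hB : 0 ≤ B := (abs_nonneg _).trans (hb 0)
  have hM : 0 ≤ M := hγ.trans hγM
  induction n with
  | zero => simp [jacobianProd]
  | succ n ih =>
    have hbP : |b n * ∏ i ∈ range n, a i| ≤ B * (C * M ^ n) := by
      rw [abs_mul]; exact mul_le_mul (hb n) (hP n) (abs_nonneg _) hB
    have hγc : γ * (M * |jacobianProd a b γ n 1 0|) ≤ M * (n * B * C * M ^ n) :=
      mul_le_mul hγM ih (by positivity) hM
    calc M * |jacobianProd a b γ (n + 1) 1 0|
        ≤ M * (|b n * ∏ i ∈ range n, a i| + γ * |jacobianProd a b γ n 1 0|) := by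
          rw [jacobianProd_succ_one_zero]
          gcongr
          exact (abs_add_le _ _).trans_eq (by rw [abs_mul γ, abs_of_nonneg hγ])
      _ = M * |b n * ∏ i ∈ range n, a i| + γ * (M * |jacobianProd a b γ n 1 0|) := by ring
      _ ≤ M * (B * (C * M ^ n)) + M * (n * B * C * M ^ n) := by gcongr
      _ = (n + 1 : ℕ) * B * C * M ^ (n + 1) := by push_cast; ring

lemma exists_norm_jacobianProd_le_mul_pow {B C M : ℝ} (hγ : 0 ≤ γ) (hγM : γ ≤ M) (hM : 0 < M)
    (hb : ∀ i, |b i| ≤ B) (hP : ∀ n, |∏ i ∈ range n, a i| ≤ C * M ^ n) :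
    ∃ D, ∀ n : ℕ, ‖jacobianProd a b γ n‖ ≤ D * (n + 1) * M ^ n := by
  have hB : 0 ≤ B := (abs_nonneg _).trans (hb 0)
  have hC : 0 ≤ C := by simpa using (abs_nonneg _).trans (hP 0)
  refine ⟨C + B * C / M + 1, fun n => ?_⟩
  have hc : |jacobianProd a b γ n 1 0| ≤ n * B * C * M ^ n / M := by
    rw [le_div_iff₀ hM, mul_comm]
    exact mul_abs_jacobianProd_one_zero_le a b hγ hγM hb hP n
  have hslack : 0 ≤ n * C * M ^ n + B * C / M * M ^ n + n * M ^ n := by positivity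
  calc ‖jacobianProd a b γ n‖
      ≤ |∏ i ∈ range n, a i| + |jacobianProd a b γ n 1 0| + γ ^ n := norm_jacobianProd_le a b hγ n
    _ ≤ C * M ^ n + n * B * C * M ^ n / M + M ^ n := by gcongr; exact hP n
    _ ≤ (C + B * C / M + 1) * (n + 1) * M ^ n := by
      rw [← sub_nonneg]; convert hslack using 1; ring

end JacobianProduct

lemma eventually_one_div_mul_log_norm_jacobianProd_lt {a b : ℕ → ℝ} {B γ c : ℝ}
    (ha : ∀ i, a i ≠ 0) (hb : ∀ i, |b i| ≤ B) (hγ : 0 < γ)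
    (hbdd : IsBoundedUnder (· ≤ ·) atTop fun n : ℕ => 1 / (n : ℝ) * log |∏ i ∈ range n, a i|)
    (hc : max (limsup (fun n : ℕ => 1 / (n : ℝ) * log |∏ i ∈ range n, a i|) atTop) (log γ) < c) :
    ∀ᶠ n : ℕ in atTop, 1 / (n : ℝ) * log ‖jacobianProd a b γ n‖ < c := by
  obtain ⟨μ, hμ, hμc⟩ := exists_between hc
  rw [max_lt_iff] at hμ
  have hγμ : γ ≤ exp μ := by simpa [exp_log hγ] using exp_le_exp.2 hμ.2.le
  obtain ⟨C, hC⟩ := exists_le_mul_pow_of_limsup_lt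
    (fun n => abs_pos.2 (prod_ne_zero_iff.2 fun i _ => ha i)) (exp_pos μ) hbdd
    (by rw [log_exp]; exact hμ.1)
  obtain ⟨D, hD⟩ := exists_norm_jacobianProd_le_mul_pow a b hγ.le hγμ (exp_pos μ) hb hC
  exact eventually_one_div_mul_log_lt_of_le_mul_pow
    (fun n => (pow_pos hγ n).trans_le (pow_le_norm_jacobianProd a b hγ.le n)) (exp_pos μ) hD
    (by rwa [log_exp])

/-- Scalar-state version of Theorem 2: with `aᵢ = f̂_S'(xᵢ) ≠ 0`, bounded `bᵢ = g'(xᵢ)`,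
and discount factor `γ > 0`, the maximal Lyapunov exponent of the cumulative-residual
system — the growth rate of the `ℓ² → ℓ²` operator norms of the ordered products
`Aₙ = [[a_{n-1}, 0], [b_{n-1}, γ]] ⋯ [[a₀, 0], [b₀, γ]]` — equals `max(λ, log γ)`, where
`λ = limsup (1/n) log |∏_{i<n} aᵢ|`. -/
theorem stmt_18 (a b : ℕ → ℝ) (ha : ∀ i, a i ≠ 0)
    (Bb : ℝ) (hb : ∀ i, |b i| ≤ Bb) (γ : ℝ) (hγ : 0 < γ) (lam : ℝ)
    (hbound : ∃ K : ℝ, ∀ n : ℕ, 1 ≤ n →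
      abs (1 / (n : ℝ) * Real.log |∏ i ∈ Finset.range n, a i|) ≤ K)
    (hlam : limsup (fun n : ℕ =>
        1 / (n : ℝ) * Real.log |∏ i ∈ Finset.range n, a i|) atTop = lam) :
    limsup (fun n : ℕ =>
        1 / (n : ℝ) *
          Real.log ‖((List.range n).reverse.map (fun i => !![a i, 0; b i, γ])).prod‖) atTop =
      max lam (Real.log γ) := by
  obtain ⟨K, hK⟩ := hbound
  change limsup (fun n : ℕ => 1 / (n : ℝ) * log ‖jacobianProd a b γ n‖) atTop = _
  have hu_bdd : IsBoundedUnder (· ≤ ·) atTop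
      fun n : ℕ => 1 / (n : ℝ) * log |∏ i ∈ range n, a i| :=
    isBoundedUnder_of_eventually_le <|
      (eventually_ge_atTop 1).mono fun n hn => (le_abs_self _).trans (hK n hn)
  have hu_cobdd : IsCoboundedUnder (· ≤ ·) atTop
      fun n : ℕ => 1 / (n : ℝ) * log |∏ i ∈ range n, a i| :=
    isCoboundedUnder_le_of_eventually_le _ <|
      (eventually_ge_atTop 1).mono fun n hn => neg_le_of_abs_le (hK n hn)
  have hL_lt : ∀ c, max lam (log γ) < c →
      ∀ᶠ n : ℕ in atTop, 1 / (n : ℝ) * log ‖jacobianProd a b γ n‖ < c := fun c hc =>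
    eventually_one_div_mul_log_norm_jacobianProd_lt ha hb hγ hu_bdd (hlam ▸ hc)
  have hγ_le : ∀ᶠ n : ℕ in atTop, log γ ≤ 1 / (n : ℝ) * log ‖jacobianProd a b γ n‖ := by
    filter_upwards [eventually_ge_atTop 1] with n hn
    rw [one_div, le_inv_mul_iff₀ (by exact_mod_cast hn), ← log_pow]
    exact log_le_log (pow_pos hγ n) (pow_le_norm_jacobianProd a b hγ.le n)
  have hL_bdd := isBoundedUnder_of_eventually_le <|
    (hL_lt _ (lt_add_one _)).mono fun _ => le_of_lt
  refine le_antisymm (le_of_forall_gt_imp_ge_of_dense fun c hc =>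
      limsup_le_of_le (isCoboundedUnder_le_of_eventually_le _ hγ_le)
        ((hL_lt c hc).mono fun _ => le_of_lt))
    (max_le ?_ (le_limsup_of_frequently_le hγ_le.frequently hL_bdd))
  rw [← hlam]
  refine limsup_le_limsup (Eventually.of_forall fun n => ?_) hu_cobdd hL_bdd
  exact mul_le_mul_of_nonneg_left (log_le_log (abs_pos.2 (prod_ne_zero_iff.2 fun i _ => ha i))
    (abs_prod_le_norm_jacobianProd a b γ n)) (by positivity)
end
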